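/- In st_n(R) (n ≥ 3), for a, b, c ∈ R and 2 ≤ i ≤ n: [t(a,b), X_{1i}(c)] = X_{1i}((ab-ba)c), [t(a,b), X_{i1}(c)] = -X_{i1}(c(ab-ba)), and [t(a,b), X_{jk}(c)] = 0 for j, k ≥ 2. -/
import Mathlib


/-- The defining relations of the Steinberg Lie algebra `st_n(R)`, for a family of
`K`-linear maps `X i j : R → L` (playing the role of `a ↦ X_{ij}(a)`). -/
structure SteinbergRel (K R : Type) [CommRing K] [Ring R] [Algebra K R]
    (n : ℕ) (L : Type) [LieRing L] [LieAlgebra K L]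
    (X : Fin n → Fin n → R →ₗ[K] L) : Prop where
  bracket_mul : ∀ ⦃i j k : Fin n⦄, i ≠ j → j ≠ k → i ≠ k → ∀ a b : R,
    ⁅X i j a, X j k b⁆ = X i k (a * b)
  bracket_zero : ∀ ⦃i j k l : Fin n⦄, i ≠ j → k ≠ l → j ≠ k → i ≠ l → ∀ a b : R,
    ⁅X i j a, X k l b⁆ = 0


/-- In `st_n(R)` (`n ≥ 3`), with `o = 0 : Fin n` playing the role of the index `1` and
`t(a,b) = T_{oj}(a,b) - T_{oj}(1, ba)` for any `j ≠ o`: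
`⁅t(a,b), X_{oi}(c)⁆ = X_{oi}((ab-ba)c)`, `⁅t(a,b), X_{io}(c)⁆ = -X_{io}(c(ab-ba))` for `i ≠ o`,
and `⁅t(a,b), X_{pq}(c)⁆ = 0` for `p, q ≠ o`. -/
theorem steinberg_t_brackets (K R L : Type) [CommRing K] [Ring R] [Algebra K R]
    [LieRing L] [LieAlgebra K L] (n : ℕ) (hn : 3 ≤ n)
    (X : Fin n → Fin n → R →ₗ[K] L) (h : SteinbergRel K R n L X)
    (o : Fin n) (ho : o = ⟨0, by omega⟩)
    (j : Fin n) (hj : j ≠ o) (a b : R)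
    (t : L) (ht : t = ⁅X o j a, X j o b⁆ - ⁅X o j 1, X j o (b * a)⁆) :
    (∀ i : Fin n, i ≠ o → ∀ c : R, ⁅t, X o i c⁆ = X o i ((a * b - b * a) * c)) ∧
    (∀ i : Fin n, i ≠ o → ∀ c : R, ⁅t, X i o c⁆ = -X i o (c * (a * b - b * a))) ∧
    (∀ p q : Fin n, p ≠ o → q ≠ o → p ≠ q → ∀ c : R, ⁅t, X p q c⁆ = 0) := by
  have hoj : o ≠ j := hj.symm
  -- pick a third index k ≠ o, j
  obtain ⟨k, hko, hkj⟩ : ∃ k : Fin n, k ≠ o ∧ k ≠ j := by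
    by_cases hj1 : j = ⟨1, by omega⟩
    · exact ⟨⟨2, by omega⟩, by simp [ho, Fin.ext_iff], by simp [hj1, Fin.ext_iff]⟩
    · exact ⟨⟨1, by omega⟩, by simp [ho, Fin.ext_iff], fun hh => hj1 hh.symm⟩
  -- helper computations for T(x,y) = ⁅X o j x, X j o y⁆
  have H1 : ∀ (x y c : R) (p : Fin n), p ≠ o → p ≠ j →
      ⁅⁅X o j x, X j o y⁆, X p j c⁆ = X p j (c * y * x) := by
    intro x y c p hp hpj
    rw [lie_lie, h.bracket_zero hoj hpj (Ne.symm hpj) hoj, lie_zero, sub_zero,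
      ← lie_skew (X j o y) (X p j c), h.bracket_mul hpj hj hp, lie_neg,
      ← lie_skew (X o j x) (X p o (c * y)), h.bracket_mul hp hoj hpj, neg_neg]
  have H2 : ∀ (x y c : R) (q : Fin n), q ≠ o → q ≠ j →
      ⁅⁅X o j x, X j o y⁆, X j q c⁆ = -X j q (y * (x * c)) := by
    intro x y c q hq hqj
    rw [lie_lie, h.bracket_zero hj (Ne.symm hqj) hoj (Ne.symm hqj), lie_zero,
      h.bracket_mul hoj (Ne.symm hqj) (Ne.symm hq),
      h.bracket_mul hj (Ne.symm hq) (Ne.symm hqj), zero_sub]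
  have H3 : ∀ (x y c : R) (p q : Fin n), p ≠ o → q ≠ o → p ≠ j → q ≠ j → p ≠ q →
      ⁅⁅X o j x, X j o y⁆, X p q c⁆ = 0 := by
    intro x y c p q hp hq hpj hqj hpq
    rw [lie_lie, h.bracket_zero hj hpq (Ne.symm hp) (Ne.symm hqj),
      h.bracket_zero hoj hpq (Ne.symm hpj) (Ne.symm hq), lie_zero, lie_zero, sub_zero]
  have H4 : ∀ (x y c : R) (i : Fin n), i ≠ o → i ≠ j →
      ⁅⁅X o j x, X j o y⁆, X o i c⁆ = X o i (x * (y * c)) := by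
    intro x y c i hi hij
    rw [lie_lie, h.bracket_mul hj (Ne.symm hi) (Ne.symm hij),
      h.bracket_zero hoj (Ne.symm hi) hj (Ne.symm hi),
      h.bracket_mul hoj (Ne.symm hij) (Ne.symm hi), lie_zero, sub_zero]
  have H5 : ∀ (x y c : R) (i : Fin n), i ≠ o → i ≠ j →
      ⁅⁅X o j x, X j o y⁆, X i o c⁆ = -X i o (c * x * y) := by
    intro x y c i hi hij
    rw [lie_lie, h.bracket_zero hj hi (Ne.symm hi) hj, lie_zero,
      ← lie_skew (X o j x) (X i o c), h.bracket_mul hi hoj hij, lie_neg,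
      ← lie_skew (X j o y) (X i j (c * x)), neg_neg, h.bracket_mul hij hj hi, zero_sub]
  -- the vanishing claim
  have hz : ∀ p q : Fin n, p ≠ o → q ≠ o → p ≠ q → ∀ c : R, ⁅t, X p q c⁆ = 0 := by
    intro p q hp hq hpq c
    rw [ht, sub_lie]
    by_cases hqj : q = j
    · subst hqj
      rw [H1 a b c p hp hpq, H1 1 (b * a) c p hp hpq, mul_one, mul_assoc, sub_self]
    · by_cases hpj : p = j
      · subst hpj
        rw [H2 a b c q hq hqj, H2 1 (b * a) c q hq hqj, one_mul, mul_assoc, sub_self]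
      · rw [H3 a b c p q hp hq hpj hqj hpq, H3 1 (b * a) c p q hp hq hpj hqj hpq,
          sub_self]
  -- first claim for i ≠ j
  have h1' : ∀ i : Fin n, i ≠ o → i ≠ j → ∀ c : R,
      ⁅t, X o i c⁆ = X o i ((a * b - b * a) * c) := by
    intro i hi hij c
    rw [ht, sub_lie, H4 a b c i hi hij, H4 1 (b * a) c i hi hij, ← LinearMap.map_sub]
    congr 1
    noncomm_ring
  -- second claim for i ≠ j
  have h2' : ∀ i : Fin n, i ≠ o → i ≠ j → ∀ c : R,
      ⁅t, X i o c⁆ = -X i o (c * (a * b - b * a)) := by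
    intro i hi hij c
    rw [ht, sub_lie, H5 a b c i hi hij, H5 1 (b * a) c i hi hij, neg_sub_neg,
      ← LinearMap.map_sub, ← LinearMap.map_neg]
    congr 1
    noncomm_ring
  refine ⟨?_, ?_, hz⟩
  · intro i hi c
    by_cases hij : i = j
    · subst hij
      have hXc : X o i c = ⁅X o k c, X k i (1 : R)⁆ := by
        rw [h.bracket_mul (Ne.symm hko) hkj hoj, mul_one]
      rw [hXc, leibniz_lie, hz k i hko hi hkj, lie_zero, add_zero,
        h1' k hko hkj c, h.bracket_mul (Ne.symm hko) hkj hoj, mul_one]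
    · exact h1' i hi hij c
  · intro i hi c
    by_cases hij : i = j
    · subst hij
      have hXc : X i o c = ⁅X i k (1 : R), X k o c⁆ := by
        rw [h.bracket_mul (Ne.symm hkj) hko hi, one_mul]
      rw [hXc, leibniz_lie, hz i k hi hko (Ne.symm hkj), zero_lie, zero_add,
        h2' k hko hkj c, lie_neg, h.bracket_mul (Ne.symm hkj) hko hi, one_mul]
    · exact h2' i hi hij c
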